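/- If a deterministic filter F is globally language comparable (GLC), then its compatibility graph G_F has the compatibility-preserving zipper neighborhoods (cpzn) property with respect to its determinism-enforcing zipper constraints Z_F: for every zipper constraint (U, W) ∈ Z_F whose target is a pair W = {w0, w1}, either N[w0] ⊆ N[w1] or N[w1] ⊆ N[w0] in G_F. -/

import Mathlib

/-- A clique cover of a simple graph: a finite family of cliques covering every vertex. -/
def SimpleGraph.IsCliqueCover {V : Type} (G : SimpleGraph V) (K : Finset (Finset V)) : Prop :=
  (∀ s ∈ K, G.IsClique (s : Set V)) ∧ ∀ v : V, ∃ s ∈ K, v ∈ s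

/-- The clique cover number: minimum number of cliques in a clique cover. -/
noncomputable def SimpleGraph.cliqueCoverNum {V : Type} (G : SimpleGraph V) : ℕ :=
  sInf {n | ∃ K : Finset (Finset V), G.IsCliqueCover K ∧ K.card = n}

/-- The closed neighborhood of a vertex. -/
def SimpleGraph.closedNbhd {V : Type} (G : SimpleGraph V) (v : V) : Set V :=
  {w | w = v ∨ G.Adj v w}

/-- A graph is chordal if every cycle of length at least four has a chord:
an edge of the graph joining two vertices of the cycle that is not an edge of the cycle. -/
def SimpleGraph.Chordal {V : Type} (G : SimpleGraph V) : Prop :=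
  ∀ (v : V) (c : G.Walk v v), c.IsCycle → 4 ≤ c.length →
    ∃ x y : V, G.Adj x y ∧ x ∈ c.support ∧ y ∈ c.support ∧ s(x, y) ∉ c.edges

/-- A deterministic (combinatorial) filter: states `S`, observations `Y`, outputs `C`,
an initial state, a partial transition function and an output function. -/
structure DFilter (S Y C : Type) where
  init : S
  tr : S → Y → Option S
  out : S → C

namespace DFilter

variable {S Y C : Type}

/-- Trace an observation sequence from a state (`none` if it crashes). -/
def run (F : DFilter S Y C) : S → List Y → Option S
  | v, [] => some v
  | v, y :: ys => (F.tr v y).bind fun w => F.run w ys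

/-- The extensions of a state: observation sequences traceable from it. -/
def Ext (F : DFilter S Y C) (v : S) : Set (List Y) :=
  {s | (F.run v s).isSome}

/-- The output sequence produced by tracing an observation sequence from a state,
reading the output at every visited state (starting with the output of the state itself). -/
def outs (F : DFilter S Y C) : S → List Y → Option (List C)
  | v, [] => some [F.out v]
  | v, y :: ys => (F.tr v y).bind fun w => (F.outs w ys).map (F.out v :: ·)

/-- Two states are compatible when the outputs they produce agree on all common extensions. -/
def Compatible (F : DFilter S Y C) (v w : S) : Prop :=
  ∀ s : List Y, s ∈ F.Ext v → s ∈ F.Ext w → F.outs v s = F.outs w s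

/-- The compatibility graph: edges join distinct compatible states. -/
def compatGraph (F : DFilter S Y C) : SimpleGraph S where
  Adj v w := v ≠ w ∧ F.Compatible v w
  symm := by
    constructor
    rintro v w ⟨hne, hc⟩
    exact ⟨hne.symm, fun s hw hv => (hc s hv hw).symm⟩
  loopless := ⟨fun v h => h.1 rfl⟩

/-- A filter is globally language comparable (GLC) when the extension sets of any two
compatible states are comparable under inclusion. -/
def GLC (F : DFilter S Y C) : Prop :=
  ∀ v w : S, F.Compatible v w → F.Ext v ⊆ F.Ext w ∨ F.Ext w ⊆ F.Ext v

/-- A filter is neighborhood comparable (NC) when any two vertices of its compatibility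
graph with intersecting closed neighborhoods have comparable closed neighborhoods. -/
def NC (F : DFilter S Y C) : Prop :=
  ∀ v w : S, (F.compatGraph.closedNbhd v ∩ F.compatGraph.closedNbhd w).Nonempty →
    F.compatGraph.closedNbhd v ⊆ F.compatGraph.closedNbhd w ∨
      F.compatGraph.closedNbhd w ⊆ F.compatGraph.closedNbhd v

/-- The target set of the determinism-enforcing zipper constraint generated by a
set of states `U` and an observation `y`: all `y`-children of members of `U`. -/
def zipTarget (F : DFilter S Y C) (U : Set S) (y : Y) : Set S :=
  {w | ∃ u ∈ U, F.tr u y = some w}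

/-- A set of mutually compatible states. -/
def MutuallyCompatible (F : DFilter S Y C) (U : Set S) : Prop :=
  ∀ u ∈ U, ∀ u' ∈ U, F.Compatible u u'

end DFilter

/-! Children of two compatible states under a common observation are again compatible, so the
two targets of a zipper constraint are compatible. In the compatibility graph the closed
neighborhood of a state is exactly the set of states compatible with it, and if `b ∼ a` has
fewer extensions than `a`, every state compatible with `a` is compatible with `b`: a common
extension of `b` and `x` is also one of `a`. Under GLC the extension sets of the two targets are
nested, hence so are their closed neighborhoods. -/

namespace DFilter

variable {S Y C : Type} (F : DFilter S Y C)

theorem Compatible.refl (v : S) : F.Compatible v v :=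
  fun _ _ _ => rfl

variable {F}

theorem Compatible.symm {v w : S} (h : F.Compatible v w) : F.Compatible w v :=
  fun s hw hv => (h s hv hw).symm

theorem Compatible.out_eq {v w : S} (h : F.Compatible v w) : F.out v = F.out w := by
  simpa [outs] using h [] rfl rfl

theorem cons_mem_Ext_iff {u w : S} {y : Y} (ht : F.tr u y = some w) (s : List Y) :
    y :: s ∈ F.Ext u ↔ s ∈ F.Ext w := by
  simp [Ext, run, ht]

theorem outs_cons {u w : S} {y : Y} (ht : F.tr u y = some w) (s : List Y) :
    F.outs u (y :: s) = (F.outs w s).map (F.out u :: ·) := by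
  simp [outs, ht]

theorem Compatible.of_tr {u₀ u₁ w₀ w₁ : S} {y : Y} (hu : F.Compatible u₀ u₁)
    (ht₀ : F.tr u₀ y = some w₀) (ht₁ : F.tr u₁ y = some w₁) : F.Compatible w₀ w₁ := by
  intro s hs₀ hs₁
  have h := hu (y :: s) ((cons_mem_Ext_iff ht₀ s).2 hs₀) ((cons_mem_Ext_iff ht₁ s).2 hs₁)
  rw [outs_cons ht₀, outs_cons ht₁, hu.out_eq] at h
  exact Option.map_injective List.cons_injective h

theorem mem_closedNbhd_compatGraph_iff {v w : S} :
    w ∈ F.compatGraph.closedNbhd v ↔ F.Compatible v w := by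
  by_cases h : w = v
  · subst h
    simpa [SimpleGraph.closedNbhd] using Compatible.refl F w
  · simp [SimpleGraph.closedNbhd, compatGraph, h, Ne.symm h]

theorem closedNbhd_subset_of_Ext_subset {a b : S} (hab : F.Compatible a b)
    (hsub : F.Ext b ⊆ F.Ext a) : F.compatGraph.closedNbhd a ⊆ F.compatGraph.closedNbhd b := by
  intro x hx
  rw [mem_closedNbhd_compatGraph_iff] at hx ⊢
  intro s hsb hsx
  exact (hab s (hsub hsb) hsb).symm.trans (hx s (hsub hsb) hsx)

theorem GLC.closedNbhd_total (hglc : F.GLC) {v w : S} (hvw : F.Compatible v w) :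
    F.compatGraph.closedNbhd v ⊆ F.compatGraph.closedNbhd w ∨
      F.compatGraph.closedNbhd w ⊆ F.compatGraph.closedNbhd v :=
  (hglc v w hvw).symm.imp (closedNbhd_subset_of_Ext_subset hvw)
    (closedNbhd_subset_of_Ext_subset hvw.symm)

end DFilter

/-- A GLC filter has the cpzn property: for every determinism-enforcing zipper constraint
whose target is a pair `{w₀, w₁}`, the closed neighborhoods of `w₀` and `w₁` in the
compatibility graph are comparable. -/
theorem glc_cpzn {S Y C : Type} (F : DFilter S Y C) (hglc : F.GLC) :
    ∀ (U : Set S) (y : Y) (w₀ w₁ : S), F.MutuallyCompatible U →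
      F.zipTarget U y = {w₀, w₁} →
      F.compatGraph.closedNbhd w₀ ⊆ F.compatGraph.closedNbhd w₁ ∨
        F.compatGraph.closedNbhd w₁ ⊆ F.compatGraph.closedNbhd w₀ := by
  intro U y w₀ w₁ hmut htar
  obtain ⟨u₀, hu₀, ht₀⟩ : w₀ ∈ F.zipTarget U y := by simp [htar]
  obtain ⟨u₁, hu₁, ht₁⟩ : w₁ ∈ F.zipTarget U y := by simp [htar]
  exact hglc.closedNbhd_total ((hmut u₀ hu₀ u₁ hu₁).of_tr ht₀ ht₁)
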